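/- arXiv:math-ph/0401046 — 4 statements merged into one kernel-verified Lean document; each statement's English description precedes it below -/
import Mathlib

section
/- Let l : M_{k×n}(ℝ) → ℝ be differentiable, U ⊆ (⋀ⁿQ)* open, and V : U → M_{k×n}(ℝ) differentiable such that for every p ∈ U, V(p) is a critical point of v ↦ p(z(v)) − l(v); define ℋ(p) := p(z(V(p))) − l(V(p)). Fix p ∈ U, write z(V(p)) = u₁ ∧ ⋯ ∧ uₙ with u_μ := e_μ + Σᵢ V(p)^i_μ fᵢ (these vectors are linearly independent), and let T denote the subspace of ⋀ⁿQ spanned by all 'slot replacements' u₁ ∧ ⋯ ∧ u_{μ−1} ∧ w ∧ u_{μ+1} ∧ ⋯ ∧ uₙ with 1 ≤ μ ≤ n and w ∈ Q. Then for every π ∈ (⋀ⁿQ)* vanishing identically on T, the derivative of ℋ at p in the direction π is zero. -/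
/-!
Envelope theorem: since `V p` is a critical point of `v ↦ p (z v) - l v`, the derivative of
`ℋ q = q (z (V q)) - l (V q)` at `p` equals that of `q ↦ q (z (V p))`, so in the direction `π` it
is `π (z (V p))`. This vanishes because `z (V p)` is itself a slot replacement (put `u₁` back in
the first slot), hence lies in `T`. Joint differentiability of `(q, v) ↦ q (z v)` comes from
finite dimensionality: multilinear maps on finite-dimensional spaces are continuous.
-/

open ExteriorAlgebra

/-- The wedge `v₁ ∧ ⋯ ∧ vₙ` of `n` vectors, as an element of the `n`-th exterior power. -/
noncomputable def wedge {Q : Type*} [AddCommGroup Q] [Module ℝ Q] (n : ℕ) (v : Fin n → Q) :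
    ⋀[ℝ]^n Q :=
  ⟨ExteriorAlgebra.ιMulti ℝ n v, ExteriorAlgebra.ιMulti_range ℝ n ⟨v, rfl⟩⟩

/-- The columns `u_μ = e_μ + Σᵢ vⁱ_μ fᵢ` of the Plücker chart. -/
def pluckerCol (n k : ℕ) (v : Fin k → Fin n → ℝ) (μ : Fin n) :
    (Fin n → ℝ) × (Fin k → ℝ) :=
  ((Pi.single μ 1 : Fin n → ℝ), (fun i => v i μ : Fin k → ℝ))

/-- The Plücker chart of the Grassmannian: `z(v) = u₁ ∧ ⋯ ∧ uₙ`. -/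
noncomputable def zPlucker (n k : ℕ) (v : Fin k → Fin n → ℝ) :
    ⋀[ℝ]^n ((Fin n → ℝ) × (Fin k → ℝ)) :=
  wedge n (pluckerCol n k v)

theorem MultilinearMap.continuous_of_finiteDimensional {𝕜 ι : Type*} [NontriviallyNormedField 𝕜]
    [CompleteSpace 𝕜] [Fintype ι] {E : ι → Type*} [∀ i, NormedAddCommGroup (E i)]
    [∀ i, NormedSpace 𝕜 (E i)] [∀ i, FiniteDimensional 𝕜 (E i)]
    {F : Type*} [NormedAddCommGroup F] [NormedSpace 𝕜 F] (f : MultilinearMap 𝕜 E F) :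
    Continuous f := by
  classical
  let b := fun i => Module.finBasis 𝕜 (E i)
  have hexpand : ⇑f = fun x => ∑ r : ∀ i, Fin (Module.finrank 𝕜 (E i)),
      (∏ i, (b i).equivFun (x i) (r i)) • f fun i => b i (r i) := by
    funext x
    conv_lhs => rw [← funext fun i => (b i).sum_equivFun (x i)]
    rw [f.map_sum]
    exact Finset.sum_congr rfl fun r _ => f.map_smul_univ _ _
  rw [hexpand]
  refine continuous_finsetSum _ fun r _ => Continuous.smul ?_ continuous_const
  refine continuous_finsetProd _ fun i _ => ?_
  exact ((continuous_apply (r i)).comp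
    (LinearMap.continuous_of_finiteDimensional (b i).equivFun.toLinearMap)).comp
    (continuous_apply i)

theorem Differentiable.dual_apply_wedge {E Q : Type*} [NormedAddCommGroup E] [NormedSpace ℝ E]
    [NormedAddCommGroup Q] [NormedSpace ℝ Q] [FiniteDimensional ℝ Q] {n : ℕ}
    (φ : Module.Dual ℝ (⋀[ℝ]^n Q)) {u : E → Fin n → Q} (hu : Differentiable ℝ u) :
    Differentiable ℝ fun v => φ (wedge n (u v)) := by
  let f : ContinuousMultilinearMap ℝ (fun _ : Fin n => Q) ℝ :=
    ⟨(φ.compAlternatingMap (exteriorPower.ιMulti ℝ n)).toMultilinearMap,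
      MultilinearMap.continuous_of_finiteDimensional _⟩
  exact fun v => (f.hasFDerivAt (u v)).differentiableAt.comp v (hu v)

theorem differentiable_uncurry_apply_of_finiteDimensional {D E W : Type*}
    [NormedAddCommGroup D] [NormedSpace ℝ D] [FiniteDimensional ℝ D]
    [NormedAddCommGroup E] [NormedSpace ℝ E] [AddCommGroup W] [Module ℝ W]
    (Φ : D →ₗ[ℝ] Module.Dual ℝ W) {g : E → W}
    (hg : ∀ φ : Module.Dual ℝ W, Differentiable ℝ fun v => φ (g v)) :
    Differentiable ℝ fun x : D × E => Φ x.1 (g x.2) := by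
  let b := Module.finBasis ℝ D
  have hexpand : (fun x : D × E => Φ x.1 (g x.2)) =
      fun x => ∑ j, b.equivFun x.1 j * Φ (b j) (g x.2) := by
    funext x
    conv_lhs => rw [← b.sum_equivFun x.1]
    simp only [map_sum, map_smul, LinearMap.sum_apply, LinearMap.smul_apply, smul_eq_mul]
  rw [hexpand]
  refine Differentiable.fun_sum fun j _ => Differentiable.mul ?_ ((hg _).comp differentiable_snd)
  exact ((ContinuousLinearMap.proj j).comp
    (LinearMap.toContinuousLinearMap b.equivFun.toLinearMap)).differentiable.comp differentiable_fst

/-- The envelope theorem. -/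
theorem fderiv_comp_graph_eq_of_fderiv_eq_zero {𝕜 D E F : Type*} [NontriviallyNormedField 𝕜]
    [NormedAddCommGroup D] [NormedSpace 𝕜 D] [NormedAddCommGroup E] [NormedSpace 𝕜 E]
    [NormedAddCommGroup F] [NormedSpace 𝕜 F] {G : D → E → F} {V : D → E} {p : D}
    (hG : DifferentiableAt 𝕜 (Function.uncurry G) (p, V p)) (hV : DifferentiableAt 𝕜 V p)
    (hcrit : fderiv 𝕜 (G p) (V p) = 0) :
    fderiv 𝕜 (fun q => G q (V q)) p = fderiv 𝕜 (fun q => G q (V p)) p := by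
  set L := fderiv 𝕜 (Function.uncurry G) (p, V p)
  have hgraph : HasFDerivAt (fun q => G q (V q)) (L.comp ((ContinuousLinearMap.id 𝕜 D).prod
      (fderiv 𝕜 V p))) p :=
    (hG.hasFDerivAt.comp p ((hasFDerivAt_id p).prodMk hV.hasFDerivAt) :)
  have hleft : HasFDerivAt (fun q => G q (V p)) (L.comp (ContinuousLinearMap.inl 𝕜 D E)) p :=
    (hG.hasFDerivAt.comp p (hasFDerivAt_prodMk_left (𝕜 := 𝕜) p (V p)) :)
  have hright : HasFDerivAt (G p) (L.comp (ContinuousLinearMap.inr 𝕜 D E)) (V p) :=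
    (hG.hasFDerivAt.comp (V p) (hasFDerivAt_prodMk_right (𝕜 := 𝕜) p (V p)) :)
  have hL : ∀ w, L (0, w) = 0 := fun w => by
    simpa [hcrit] using congr($(hright.fderiv.symm) w)
  rw [hgraph.fderiv, hleft.fderiv]
  ext d
  calc L (d, fderiv 𝕜 V p d) = L ((d, 0) + (0, fderiv 𝕜 V p d)) := by simp
    _ = L (d, 0) := by rw [map_add, hL, add_zero]

theorem linearIndependent_pluckerCol (n k : ℕ) (v : Fin k → Fin n → ℝ) :
    LinearIndependent ℝ (pluckerCol n k v) :=
  LinearIndependent.of_comp (LinearMap.fst ℝ _ _) (Pi.linearIndependent_single_one (Fin n) ℝ)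

theorem differentiable_pluckerCol (n k : ℕ) : Differentiable ℝ (pluckerCol n k) := by
  unfold pluckerCol
  fun_prop

/-- The dual space `(⋀ⁿQ)*` is represented by an arbitrary finite-dimensional normed model `D`
via a linear equivalence `ε`. -/
theorem statement2_general (n k : ℕ) (hn : 1 ≤ n)
    (l : (Fin k → Fin n → ℝ) → ℝ) (hl : Differentiable ℝ l)
    {D : Type*} [NormedAddCommGroup D] [NormedSpace ℝ D]
    (ε : D ≃ₗ[ℝ] Module.Dual ℝ (⋀[ℝ]^n ((Fin n → ℝ) × (Fin k → ℝ))))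
    (U : Set D) (hU : IsOpen U)
    (V : D → (Fin k → Fin n → ℝ)) (hV : DifferentiableOn ℝ V U)
    (hcrit : ∀ p ∈ U, fderiv ℝ (fun v => ε p (zPlucker n k v) - l v) (V p) = 0)
    (ℋ : D → ℝ) (hℋ : ∀ p, ℋ p = ε p (zPlucker n k (V p)) - l (V p))
    (p : D) (hp : p ∈ U)
    (T : Submodule ℝ (⋀[ℝ]^n ((Fin n → ℝ) × (Fin k → ℝ))))
    (hT : T = Submodule.span ℝ
      {w | ∃ (μ : Fin n) (q : (Fin n → ℝ) × (Fin k → ℝ)),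
        w = wedge n (Function.update (pluckerCol n k (V p)) μ q)}) :
    LinearIndependent ℝ (pluckerCol n k (V p)) ∧
      ∀ π : Module.Dual ℝ (⋀[ℝ]^n ((Fin n → ℝ) × (Fin k → ℝ))),
        (∀ t ∈ T, π t = 0) → fderiv ℝ ℋ p (ε.symm π) = 0 := by
  refine ⟨linearIndependent_pluckerCol n k (V p), fun π hπ => ?_⟩
  have : FiniteDimensional ℝ D := ε.symm.finiteDimensional
  have hG : Differentiable ℝ (Function.uncurry fun q v => ε q (zPlucker n k v) - l v) :=
    (differentiable_uncurry_apply_of_finiteDimensional ε.toLinearMap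
      fun φ => (differentiable_pluckerCol n k).dual_apply_wedge φ).sub (hl.comp differentiable_snd)
  have hz : zPlucker n k (V p) ∈ T :=
    hT ▸ Submodule.subset_span ⟨⟨0, hn⟩, _, by rw [Function.update_eq_self]; rfl⟩
  let A : D →L[ℝ] ℝ := LinearMap.toContinuousLinearMap
    ((LinearMap.applyₗ (zPlucker n k (V p))).comp ε.toLinearMap)
  rw [funext hℋ, fderiv_comp_graph_eq_of_fderiv_eq_zero (hG _)
    (hV.differentiableAt (hU.mem_nhds hp)) (hcrit p hp)]
  change fderiv ℝ (fun q => A q - l (V p)) p _ = 0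
  rw [fderiv_sub_const, A.fderiv]
  simpa [A] using hπ _ hz

/-- the Legendre-image Hamiltonian is constant in the pseudofiber directions,
i.e. its derivative vanishes in every direction `π` annihilating the tangent space
`T = T_{z(V(p))}D` to the cone of decomposable `n`-vectors (spanned by all slot
replacements `u₁ ∧ ⋯ ∧ w ∧ ⋯ ∧ uₙ`).  The dual space `(⋀ⁿQ)*` is represented by an
arbitrary finite-dimensional normed model `D` via a linear equivalence `ε`. -/
theorem statement2 (n k : ℕ) (hn : 1 ≤ n) (hk : 1 ≤ k)
    (l : (Fin k → Fin n → ℝ) → ℝ) (hl : Differentiable ℝ l)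
    {D : Type*} [NormedAddCommGroup D] [NormedSpace ℝ D]
    (ε : D ≃ₗ[ℝ] Module.Dual ℝ (⋀[ℝ]^n ((Fin n → ℝ) × (Fin k → ℝ))))
    (U : Set D) (hU : IsOpen U)
    (V : D → (Fin k → Fin n → ℝ)) (hV : DifferentiableOn ℝ V U)
    (hcrit : ∀ p ∈ U, fderiv ℝ (fun v => ε p (zPlucker n k v) - l v) (V p) = 0)
    (ℋ : D → ℝ) (hℋ : ∀ p, ℋ p = ε p (zPlucker n k (V p)) - l (V p))
    (p : D) (hp : p ∈ U)
    (T : Submodule ℝ (⋀[ℝ]^n ((Fin n → ℝ) × (Fin k → ℝ))))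
    (hT : T = Submodule.span ℝ
      {w | ∃ (μ : Fin n) (q : (Fin n → ℝ) × (Fin k → ℝ)),
        w = wedge n (Function.update (pluckerCol n k (V p)) μ q)}) :
    LinearIndependent ℝ (pluckerCol n k (V p)) ∧
      ∀ π : Module.Dual ℝ (⋀[ℝ]^n ((Fin n → ℝ) × (Fin k → ℝ))),
        (∀ t ∈ T, π t = 0) → fderiv ℝ ℋ p (ε.symm π) = 0 :=
  statement2_general n k hn l hl ε U hU V hV hcrit ℋ hℋ p hp T hT
end

section
/- Let η ∈ W* with η_P ≠ 0. If (X₁,…,Xₙ) is a Hamiltonian n-frame for η, then for every π ∈ P one has π(pr_Q X₁ ∧ ⋯ ∧ pr_Q Xₙ) = η(0,π). Consequently: (a) the nonzero n-vector z := pr_Q X₁ ∧ ⋯ ∧ pr_Q Xₙ ∈ ⋀ⁿQ is the same for every Hamiltonian n-frame for η; (b) pr_Q is injective on the linear span of X₁,…,Xₙ, i.e. this span is the graph of a linear map over the n-dimensional subspace of Q spanned by pr_Q X₁,…,pr_Q Xₙ. -/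
open ExteriorAlgebra

set_option synthInstance.maxHeartbeats 1000000
set_option maxHeartbeats 1000000

/-- The phase space `W = Q × P` with `Q = ℝ^(n+k)` and `P = (⋀ⁿQ)*`. -/
abbrev phaseSpace (n k : ℕ) :=
  (Fin (n + k) → ℝ) × Module.Dual ℝ (⋀[ℝ]^n (Fin (n + k) → ℝ))

/-- The canonical multisymplectic form
`Ω(w₁,…,w_{n+1}) = Σᵢ (−1)^(i−1) πᵢ(ξ₁ ∧ ⋯ ∧ ξ̂ᵢ ∧ ⋯ ∧ ξ_{n+1})` on `W = Q × P`,
where `w_j = (ξ_j, π_j)`. -/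
noncomputable def multisymp (n k : ℕ) (w : Fin (n + 1) → phaseSpace n k) : ℝ :=
  ∑ i : Fin (n + 1), (-1 : ℝ) ^ (i : ℕ) *
    (w i).2 (wedge n (fun j => (w (i.succAbove j)).1))

/-- A Hamiltonian `n`-frame for a linear form `η` on `W`: an `n`-tuple `X` of vectors of `W`
with `X₁ ∧ ⋯ ∧ Xₙ ≠ 0` satisfying the Hamilton equation `Ω(X₁,…,Xₙ,Y) = (−1)ⁿ η(Y)`. -/
noncomputable def IsHamFrame (n k : ℕ) (η : Module.Dual ℝ (phaseSpace n k))
    (X : Fin n → phaseSpace n k) : Prop :=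
  ExteriorAlgebra.ιMulti ℝ n X ≠ 0 ∧
    ∀ Y : phaseSpace n k,
      multisymp n k (Fin.snoc X Y : Fin (n + 1) → phaseSpace n k) = (-1 : ℝ) ^ n * η Y

/-- Lemma 4.1 (i) of the paper: for a Hamiltonian `n`-frame `X` for `η`,
`π(pr_Q X₁ ∧ ⋯ ∧ pr_Q Xₙ) = η(0,π)` for all `π ∈ P`; hence the horizontal `n`-vector
`z = pr_Q X₁ ∧ ⋯ ∧ pr_Q Xₙ` is nonzero and frame-independent, and `pr_Q` is injective
on the span of the frame. -/
theorem statement7 (n k : ℕ) (hn : 1 ≤ n) (hk : 1 ≤ k)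
    (η : Module.Dual ℝ (phaseSpace n k))
    (hηP : ∃ π : Module.Dual ℝ (⋀[ℝ]^n (Fin (n + k) → ℝ)), η (0, π) ≠ 0)
    (X : Fin n → phaseSpace n k) (hX : IsHamFrame n k η X) :
    (∀ π : Module.Dual ℝ (⋀[ℝ]^n (Fin (n + k) → ℝ)),
        π (wedge n (fun i => (X i).1)) = η (0, π)) ∧
      wedge n (fun i => (X i).1) ≠ 0 ∧
      (∀ X' : Fin n → phaseSpace n k, IsHamFrame n k η X' →
        wedge n (fun i => (X' i).1) = wedge n (fun i => (X i).1)) ∧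
      (∀ Y Z : phaseSpace n k, Y ∈ Submodule.span ℝ (Set.range X) →
        Z ∈ Submodule.span ℝ (Set.range X) → Y.1 = Z.1 → Y = Z) := by
  have keyLem : ∀ X' : Fin n → phaseSpace n k, IsHamFrame n k η X' →
      ∀ π : Module.Dual ℝ (⋀[ℝ]^n (Fin (n + k) → ℝ)),
        π (wedge n (fun i => (X' i).1)) = η (0, π) := by
    intro X' hX' π
    have h := hX'.2 (0, π)
    have hsum : multisymp n k ((Fin.snoc X' (0, π) : Fin (n+1) → phaseSpace n k)) =
        (-1 : ℝ) ^ n * π (wedge n (fun i => (X' i).1)) := by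
      unfold multisymp
      rw [Finset.sum_eq_single (Fin.last n)]
      · have h1 : ((Fin.snoc X' (0, π) : Fin (n+1) → phaseSpace n k) (Fin.last n)) = (0, π) :=
          Fin.snoc_last _ _
        have h2 : (fun j => (((Fin.snoc X' (0, π) : Fin (n+1) → phaseSpace n k))
            ((Fin.last n).succAbove j)).1) = fun j => (X' j).1 := by
          funext j
          rw [Fin.succAbove_last, Fin.snoc_castSucc]
        rw [h1, h2, Fin.val_last]
      · intro i _ hi
        obtain ⟨j₀, hj₀⟩ := Fin.exists_succAbove_eq (Ne.symm hi)
        have hz : (fun j => (((Fin.snoc X' (0, π) : Fin (n+1) → phaseSpace n k))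
            (i.succAbove j)).1) j₀ = 0 := by
          simp only [hj₀, Fin.snoc_last]
        have hw : wedge n (fun j => (((Fin.snoc X' (0, π) : Fin (n+1) → phaseSpace n k))
            (i.succAbove j)).1) = 0 := by
          apply Subtype.ext
          simpa [wedge] using
            (ExteriorAlgebra.ιMulti ℝ n
              (M := Fin (n + k) → ℝ)).map_coord_zero j₀ hz
        rw [hw, map_zero, mul_zero]
      · intro h'
        exact absurd (Finset.mem_univ _) h'
    rw [hsum] at h
    have hne : ((-1 : ℝ) ^ n) ≠ 0 := by
      simp
    exact mul_left_cancel₀ hne h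
  have key := keyLem X hX
  obtain ⟨π₀, hπ₀⟩ := hηP
  have hzne : wedge n (fun i => (X i).1) ≠ 0 := by
    intro h0
    apply hπ₀
    rw [← key π₀, h0, map_zero]
  have hli : LinearIndependent ℝ (fun i => (X i).1) := by
    by_contra hdep
    apply hzne
    apply Subtype.ext
    simpa [wedge] using
      (ExteriorAlgebra.ιMulti ℝ n (M := Fin (n + k) → ℝ)).map_linearDependent _ hdep
  refine ⟨key, hzne, ?_, ?_⟩
  · intro X' hX'
    rw [← sub_eq_zero, ← Module.forall_dual_apply_eq_zero_iff ℝ]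
    intro φ
    rw [map_sub, keyLem X' hX' φ, key φ, sub_self]
  · intro Y Z hY hZ h1
    obtain ⟨c, hc⟩ := Submodule.mem_span_range_iff_exists_fun ℝ |>.mp hY
    obtain ⟨d, hd⟩ := Submodule.mem_span_range_iff_exists_fun ℝ |>.mp hZ
    have hcd : ∀ i, c i = d i := by
      have hsum : ∑ i, (c i - d i) • (X i).1 = 0 := by
        have h1' : (∑ i, c i • X i).1 = (∑ i, d i • X i).1 := by rw [hc, hd, h1]
        simp only [Prod.fst_sum, Prod.smul_fst] at h1'
        simp [sub_smul, Finset.sum_sub_distrib, h1', sub_self]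
      intro i
      have := Fintype.linearIndependent_iff.mp hli _ hsum i
      linarith [this]
    rw [← hc, ← hd]
    exact Finset.sum_congr rfl fun i _ => by rw [hcd i]
end

section
/- Let η ∈ W* with η_P ≠ 0, suppose there exists a Hamiltonian n-frame for η, and let S ⊆ Q be the n-dimensional subspace spanned by pr_Q X₁,…,pr_Q Xₙ for any Hamiltonian n-frame (X₁,…,Xₙ) for η (this subspace is independent of the choice of frame). Let a = λη + b∘pr_Q with λ ∈ ℝ and b ∈ Q*. Then: (1) a is nonvanishing on the linear span of every Hamiltonian n-frame for η if and only if the restriction of b to S is nonzero; (2) a vanishes identically on the linear span of every Hamiltonian n-frame for η if and only if b restricted to S is zero. In particular, η itself vanishes identically on the linear span of every Hamiltonian n-frame for η. -/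
open ExteriorAlgebra

set_option synthInstance.maxHeartbeats 1000000
set_option maxHeartbeats 1000000

/-!
Feeding a vertical vector `(0, π)` into the Hamilton equation gives
`π (pr_Q X₁ ∧ ⋯ ∧ pr_Q Xₙ) = η (0, π)`, so all Hamiltonian frames have the same horizontal wedge,
which is nonzero because `η_P ≠ 0`. A nonzero decomposable `n`-vector determines its span (a vector
`x` lies in it iff `x ∧ ξ = 0`), so every frame projects onto the same `S`. Feeding `Xᵢ` itself
gives `η (Xᵢ) = 0` because `Ω` is alternating. Hence on the span of any frame `a` coincides with
`b ∘ pr_Q`, and that span projects onto `S`.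
-/

section ExteriorPower

variable {K E : Type*} [Field K] [AddCommGroup E] [Module K E] {n : ℕ}

theorem ιMulti_ne_zero_of_linearIndependent {v : Fin n → E} (hv : LinearIndependent K v) :
    ExteriorAlgebra.ιMulti K n v ≠ 0 := by
  have := (exteriorPower.ιMulti_family_linearIndependent_field (n := n) hv).ne_zero
    (Set.powersetCard.ofFinEmbEquiv (OrderIso.refl (Fin n)).toOrderEmbedding)
  rw [exteriorPower.ιMulti_family, Equiv.symm_apply_apply] at this
  exact fun h => this (Subtype.ext h)

theorem mem_span_iff_ι_mul_ιMulti_eq_zero {v : Fin n → E} (hv : LinearIndependent K v) (x : E) :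
    x ∈ Submodule.span K (Set.range v) ↔ ι K x * ExteriorAlgebra.ιMulti K n v = 0 := by
  have hcons : ι K x * ExteriorAlgebra.ιMulti K n v =
      ExteriorAlgebra.ιMulti K (n + 1) (Fin.cons x v) := by
    rw [ExteriorAlgebra.ιMulti_succ_apply]; rfl
  rw [hcons]
  refine ⟨fun hx => ?_, fun h0 => ?_⟩
  · exact AlternatingMap.map_linearDependent _ _ fun h => (linearIndependent_finCons.mp h).2 hx
  · by_contra hx
    exact ιMulti_ne_zero_of_linearIndependent (linearIndependent_finCons.mpr ⟨hv, hx⟩) h0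

theorem span_range_eq_of_ιMulti_eq {v w : Fin n → E}
    (h : ExteriorAlgebra.ιMulti K n v = ExteriorAlgebra.ιMulti K n w)
    (h0 : ExteriorAlgebra.ιMulti K n v ≠ 0) :
    Submodule.span K (Set.range v) = Submodule.span K (Set.range w) := by
  have linIndep {u : Fin n → E} (hu : ExteriorAlgebra.ιMulti K n u ≠ 0) : LinearIndependent K u :=
    by_contra fun hdep => hu (AlternatingMap.map_linearDependent _ u hdep)
  ext x
  rw [mem_span_iff_ι_mul_ιMulti_eq_zero (linIndep h0), h,
    mem_span_iff_ι_mul_ιMulti_eq_zero (linIndep (h ▸ h0))]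

end ExteriorPower

section Multisymplectic

variable {n k : ℕ}

theorem wedge_eq_exteriorPower_ιMulti {Q : Type*} [AddCommGroup Q] [Module ℝ Q] (v : Fin n → Q) :
    wedge n v = exteriorPower.ιMulti ℝ n v :=
  rfl

noncomputable def multisympCurried (n k : ℕ) :
    phaseSpace n k →ₗ[ℝ] phaseSpace n k [⋀^Fin n]→ₗ[ℝ] ℝ where
  toFun w := (w.2.compAlternatingMap (exteriorPower.ιMulti ℝ n)).compLinearMap
    (LinearMap.fst ℝ _ _)
  map_add' _ _ := rfl
  map_smul' _ _ := rfl

noncomputable def multisympForm (n k : ℕ) : phaseSpace n k [⋀^Fin (n + 1)]→ₗ[ℝ] ℝ :=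
  AlternatingMap.alternatizeUncurryFin (multisympCurried n k)

theorem multisympForm_apply (w : Fin (n + 1) → phaseSpace n k) :
    multisympForm n k w = multisymp n k w := by
  rw [multisympForm, AlternatingMap.alternatizeUncurryFin_apply]
  refine Finset.sum_congr rfl fun i _ => ?_
  rw [zsmul_eq_mul]
  push_cast
  rfl

theorem multisymp_snoc_self (X : Fin n → phaseSpace n k) (i : Fin n) :
    multisymp n k (Fin.snoc X (X i)) = 0 := by
  rw [← multisympForm_apply]
  exact (multisympForm n k).map_eq_zero_of_eq _ (i := i.castSucc) (j := Fin.last n)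
    (by simp) (Fin.castSucc_lt_last i).ne

theorem multisymp_snoc_vertical (X : Fin n → phaseSpace n k)
    (π : Module.Dual ℝ (⋀[ℝ]^n (Fin (n + k) → ℝ))) :
    multisymp n k (Fin.snoc X (0, π)) = (-1 : ℝ) ^ n * π (wedge n fun j => (X j).1) := by
  rw [multisymp, Fin.sum_univ_castSucc, Finset.sum_eq_zero, zero_add]
  · simp [Fin.succAbove_last]
  · intro i _
    obtain ⟨j, hj⟩ := Fin.exists_succAbove_eq (Fin.castSucc_lt_last i).ne'
    rw [wedge_eq_exteriorPower_ιMulti, AlternatingMap.map_coord_zero _ j (by simp [hj]),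
      map_zero, mul_zero]

end Multisymplectic

theorem Submodule.le_ker_smul_add_iff {R M N : Type*} [CommRing R] [AddCommGroup M] [Module R M]
    [AddCommGroup N] [Module R N] {p : Submodule R M} {f : M →ₗ[R] N} (hf : p ≤ LinearMap.ker f)
    (c : R) (g : M →ₗ[R] N) : p ≤ LinearMap.ker (c • f + g) ↔ p ≤ LinearMap.ker g := by
  refine forall₂_congr fun x hx => ?_
  simp [LinearMap.mem_ker.mp (hf hx)]

theorem Submodule.map_fst_span_range {R M N ι : Type*} [Semiring R] [AddCommMonoid M] [Module R M]
    [AddCommMonoid N] [Module R N] (v : ι → M × N) :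
    (Submodule.span R (Set.range v)).map (LinearMap.fst R M N) =
      Submodule.span R (Set.range fun i => (v i).1) := by
  rw [Submodule.map_span, ← Set.range_comp]
  rfl

namespace IsHamFrame

variable {n k : ℕ} {η : Module.Dual ℝ (phaseSpace n k)} {X Y : Fin n → phaseSpace n k}

theorem apply_wedge (hX : IsHamFrame n k η X) (π : Module.Dual ℝ (⋀[ℝ]^n (Fin (n + k) → ℝ))) :
    π (wedge n fun j => (X j).1) = η (0, π) := by
  have h := hX.2 (0, π)
  rw [multisymp_snoc_vertical] at h
  exact mul_left_cancel₀ (pow_ne_zero n (by norm_num)) h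

theorem wedge_eq (hX : IsHamFrame n k η X) (hY : IsHamFrame n k η Y) :
    (wedge n fun j => (X j).1) = wedge n fun j => (Y j).1 :=
  sub_eq_zero.mp <| (Module.forall_dual_apply_eq_zero_iff ℝ _).mp fun π => by
    rw [map_sub, hX.apply_wedge, hY.apply_wedge, sub_self]

theorem span_le_ker (hX : IsHamFrame n k η X) :
    Submodule.span ℝ (Set.range X) ≤ LinearMap.ker η := by
  rw [Submodule.span_le]
  rintro _ ⟨i, rfl⟩
  have h := hX.2 (X i)
  rw [multisymp_snoc_self] at h
  exact (mul_eq_zero.mp h.symm).resolve_left (pow_ne_zero n (by norm_num))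

theorem span_range_fst_eq (hX : IsHamFrame n k η X) (hY : IsHamFrame n k η Y)
    (hη : ∃ π : Module.Dual ℝ (⋀[ℝ]^n (Fin (n + k) → ℝ)), η (0, π) ≠ 0) :
    Submodule.span ℝ (Set.range fun j => (X j).1) =
      Submodule.span ℝ (Set.range fun j => (Y j).1) := by
  refine span_range_eq_of_ιMulti_eq (congrArg Subtype.val (hX.wedge_eq hY)) fun h0 => ?_
  obtain ⟨π, hπ⟩ := hη
  rw [← hX.apply_wedge, show wedge n (fun j => (X j).1) = 0 from Subtype.ext h0, map_zero] at hπ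
  exact hπ rfl

theorem span_le_ker_iff (hX : IsHamFrame n k η X) (hY : IsHamFrame n k η Y)
    (hη : ∃ π : Module.Dual ℝ (⋀[ℝ]^n (Fin (n + k) → ℝ)), η (0, π) ≠ 0)
    (c : ℝ) (b : Module.Dual ℝ (Fin (n + k) → ℝ)) :
    Submodule.span ℝ (Set.range X) ≤ LinearMap.ker (c • η + b ∘ₗ LinearMap.fst ℝ _ _) ↔
      Submodule.span ℝ (Set.range fun j => (Y j).1) ≤ LinearMap.ker b := by
  rw [Submodule.le_ker_smul_add_iff hX.span_le_ker, ← hX.span_range_fst_eq hY hη,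
    ← Submodule.map_fst_span_range, Submodule.map_le_iff_le_comap, ← LinearMap.ker_comp]

end IsHamFrame

theorem statement9_general (n k : ℕ)
    (η : Module.Dual ℝ (phaseSpace n k))
    (hηP : ∃ π : Module.Dual ℝ (⋀[ℝ]^n (Fin (n + k) → ℝ)), η (0, π) ≠ 0)
    (X₀ : Fin n → phaseSpace n k) (hX₀ : IsHamFrame n k η X₀)
    (S : Submodule ℝ (Fin (n + k) → ℝ))
    (hS : S = Submodule.span ℝ (Set.range (fun i => (X₀ i).1)))
    (lam : ℝ) (b : Module.Dual ℝ (Fin (n + k) → ℝ))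
    (a : Module.Dual ℝ (phaseSpace n k))
    (ha : a = lam • η + b ∘ₗ LinearMap.fst ℝ (Fin (n + k) → ℝ)
      (Module.Dual ℝ (⋀[ℝ]^n (Fin (n + k) → ℝ)))) :
    ((∀ X : Fin n → phaseSpace n k, IsHamFrame n k η X →
        ∃ w ∈ Submodule.span ℝ (Set.range X), a w ≠ 0) ↔ ∃ s ∈ S, b s ≠ 0) ∧
    ((∀ X : Fin n → phaseSpace n k, IsHamFrame n k η X →
        ∀ w ∈ Submodule.span ℝ (Set.range X), a w = 0) ↔ ∀ s ∈ S, b s = 0) ∧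
    (∀ X : Fin n → phaseSpace n k, IsHamFrame n k η X →
        ∀ w ∈ Submodule.span ℝ (Set.range X), η w = 0) := by
  have vanishes_iff {X} (hX : IsHamFrame n k η X) :
      Submodule.span ℝ (Set.range X) ≤ LinearMap.ker a ↔ S ≤ LinearMap.ker b :=
    ha ▸ hS ▸ hX.span_le_ker_iff hX₀ hηP lam b
  have nonvanishing_iff {X} (hX : IsHamFrame n k η X) :
      (∃ w ∈ Submodule.span ℝ (Set.range X), a w ≠ 0) ↔ ∃ s ∈ S, b s ≠ 0 := by
    simpa only [SetLike.not_le_iff_exists, LinearMap.mem_ker] using (vanishes_iff hX).not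
  exact ⟨⟨fun h => (nonvanishing_iff hX₀).1 (h X₀ hX₀), fun h _ hX => (nonvanishing_iff hX).2 h⟩,
    ⟨fun h => (vanishes_iff hX₀).1 (h X₀ hX₀), fun h _ hX => (vanishes_iff hX).2 h⟩,
    fun _ hX => hX.span_le_ker⟩

/-- Lemma 4.1 (iii) of the paper, invariant form: writing `a = λ η + b ∘ pr_Q`,
the form `a` is a point-slice iff `b` does not vanish on the horizontal space `S` of the
frames, and is co-isotropic iff `b` vanishes on `S`; in particular `η` itself vanishes on
the span of every Hamiltonian `n`-frame for `η`. -/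
theorem statement9 (n k : ℕ) (hn : 1 ≤ n) (hk : 1 ≤ k)
    (η : Module.Dual ℝ (phaseSpace n k))
    (hηP : ∃ π : Module.Dual ℝ (⋀[ℝ]^n (Fin (n + k) → ℝ)), η (0, π) ≠ 0)
    (X₀ : Fin n → phaseSpace n k) (hX₀ : IsHamFrame n k η X₀)
    (S : Submodule ℝ (Fin (n + k) → ℝ))
    (hS : S = Submodule.span ℝ (Set.range (fun i => (X₀ i).1)))
    (lam : ℝ) (b : Module.Dual ℝ (Fin (n + k) → ℝ))
    (a : Module.Dual ℝ (phaseSpace n k))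
    (ha : a = lam • η + b ∘ₗ LinearMap.fst ℝ (Fin (n + k) → ℝ)
      (Module.Dual ℝ (⋀[ℝ]^n (Fin (n + k) → ℝ)))) :
    ((∀ X : Fin n → phaseSpace n k, IsHamFrame n k η X →
        ∃ w ∈ Submodule.span ℝ (Set.range X), a w ≠ 0) ↔ ∃ s ∈ S, b s ≠ 0) ∧
    ((∀ X : Fin n → phaseSpace n k, IsHamFrame n k η X →
        ∀ w ∈ Submodule.span ℝ (Set.range X), a w = 0) ↔ ∀ s ∈ S, b s = 0) ∧
    (∀ X : Fin n → phaseSpace n k, IsHamFrame n k η X →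
        ∀ w ∈ Submodule.span ℝ (Set.range X), η w = 0) :=
  statement9_general n k η hηP X₀ hX₀ S hS lam b a ha
end

section
/- Take n = 2 and k = 2, so Q = ℝ⁴ with standard basis (e₁,e₂,e₃,e₄), P = (⋀²Q)*, W = Q × P. Let η ∈ W* be defined by η(ξ, π) := π(e₁∧e₂) + π(e₃∧e₄) for (ξ,π) ∈ W (i.e. η = d(p₁₂ + p₃₄)). Then there exists no Hamiltonian 2-frame for η. -/
open ExteriorAlgebra

set_option synthInstance.maxHeartbeats 1000000
set_option maxHeartbeats 1000000

/-- The coordinate functional `p_{ab}` on `⋀²(ℝ⁴)`, sending `ξ ∧ η` to `ξ_a η_b − ξ_b η_a`. -/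
noncomputable def coordFun (a b : Fin (2 + 2)) :
    Module.Dual ℝ (⋀[ℝ]^2 (Fin (2 + 2) → ℝ)) :=
  (ExteriorAlgebra.liftAlternating
    (fun i => match i with
      | 2 => (Matrix.detRowAlternating).compLinearMap (LinearMap.funLeft ℝ ℝ ![a, b])
      | _ => 0)) ∘ₗ (Submodule.subtype _)

theorem coordFun_wedge (a b : Fin (2 + 2)) (v : Fin 2 → (Fin (2 + 2) → ℝ)) :
    coordFun a b (wedge 2 v) = v 0 a * v 1 b - v 0 b * v 1 a := by
  show ExteriorAlgebra.liftAlternating _ (ιMulti ℝ 2 v) = _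
  rw [liftAlternating_apply_ιMulti]
  show Matrix.det (Matrix.of fun j => (v j) ∘ ![a, b]) = _
  rw [Matrix.det_fin_two]
  simp

theorem multisymp_snoc_zero (X : Fin 2 → phaseSpace 2 2)
    (ρ : Module.Dual ℝ (⋀[ℝ]^2 (Fin (2 + 2) → ℝ))) :
    multisymp 2 2 (Fin.snoc X ((0 : Fin (2 + 2) → ℝ), ρ)) =
      ρ (wedge 2 fun j => (X j).1) := by
  have hz : ∀ v : Fin 2 → (Fin (2 + 2) → ℝ), v 1 = 0 → wedge 2 v = 0 := by
    intro v hv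
    apply Subtype.ext
    exact (ιMulti ℝ 2).map_coord_zero 1 hv
  rw [multisymp, Fin.sum_univ_three]
  have e0 : ((Fin.snoc X ((0 : Fin (2 + 2) → ℝ), ρ) : Fin 3 → phaseSpace 2 2) 0) = X 0 := by
    simp [Fin.snoc]
  have e1 : ((Fin.snoc X ((0 : Fin (2 + 2) → ℝ), ρ) : Fin 3 → phaseSpace 2 2) 1) = X 1 := by
    simp [Fin.snoc]
  have e2 : ((Fin.snoc X ((0 : Fin (2 + 2) → ℝ), ρ) : Fin 3 → phaseSpace 2 2) 2)
      = ((0 : Fin (2 + 2) → ℝ), ρ) := by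
    simp [Fin.snoc]
  rw [e0, e1, e2]
  have f0 : (fun j => ((Fin.snoc X ((0 : Fin (2 + 2) → ℝ), ρ) : Fin 3 → phaseSpace 2 2)
      ((0 : Fin 3).succAbove j)).1) 1 = 0 := by
    simp [Fin.snoc, Fin.succAbove]
  have f1 : (fun j => ((Fin.snoc X ((0 : Fin (2 + 2) → ℝ), ρ) : Fin 3 → phaseSpace 2 2)
      ((1 : Fin 3).succAbove j)).1) 1 = 0 := by
    simp [Fin.snoc, Fin.succAbove]
  have f2 : (fun j => ((Fin.snoc X ((0 : Fin (2 + 2) → ℝ), ρ) : Fin 3 → phaseSpace 2 2)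
      ((2 : Fin 3).succAbove j)).1) = fun j => (X j).1 := by
    funext j
    fin_cases j <;> simp [Fin.snoc, Fin.succAbove] <;>
      exact congrArg (Prod.fst ∘ X) (by ext; rfl)
  rw [hz _ f0, hz _ f1, f2]
  simp

/-- example of Section 3.1 of the paper: for `n = k = 2` and
`η(ξ,π) = π(e₁∧e₂) + π(e₃∧e₄)` (i.e. `η = d(p₁₂ + p₃₄)`), there exists no Hamiltonian
2-frame for `η`. -/
theorem statement13
    (η : Module.Dual ℝ (phaseSpace 2 2))
    (hη : η = (Module.Dual.eval ℝ (⋀[ℝ]^2 (Fin (2 + 2) → ℝ))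
        (wedge 2 ![(Pi.single 0 1 : Fin (2 + 2) → ℝ), Pi.single 1 1] +
          wedge 2 ![(Pi.single 2 1 : Fin (2 + 2) → ℝ), Pi.single 3 1])) ∘ₗ
      LinearMap.snd ℝ (Fin (2 + 2) → ℝ) (Module.Dual ℝ (⋀[ℝ]^2 (Fin (2 + 2) → ℝ)))) :
    ¬ ∃ X : Fin 2 → phaseSpace 2 2, IsHamFrame 2 2 η X := by
  rintro ⟨X, -, hX⟩
  set A := (X 0).1 with hA
  set B := (X 1).1 with hB
  have hv : (fun j => (X j).1) = ![A, B] := by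
    funext j; fin_cases j <;> rfl
  have key : ∀ ρ : Module.Dual ℝ (⋀[ℝ]^2 (Fin (2 + 2) → ℝ)),
      ρ (wedge 2 ![A, B]) =
        ρ (wedge 2 ![(Pi.single 0 1 : Fin (2 + 2) → ℝ), Pi.single 1 1]) +
          ρ (wedge 2 ![(Pi.single 2 1 : Fin (2 + 2) → ℝ), Pi.single 3 1]) := by
    intro ρ
    have h := hX ((0 : Fin (2 + 2) → ℝ), ρ)
    rw [multisymp_snoc_zero, hv, hη] at h
    simpa using h
  have hcoord : ∀ a b : Fin (2 + 2),
      A a * B b - A b * B a =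
        ((Pi.single 0 1 : Fin (2 + 2) → ℝ) a * (Pi.single 1 1 : Fin (2 + 2) → ℝ) b -
          (Pi.single 0 1 : Fin (2 + 2) → ℝ) b * (Pi.single 1 1 : Fin (2 + 2) → ℝ) a) +
        ((Pi.single 2 1 : Fin (2 + 2) → ℝ) a * (Pi.single 3 1 : Fin (2 + 2) → ℝ) b -
          (Pi.single 2 1 : Fin (2 + 2) → ℝ) b * (Pi.single 3 1 : Fin (2 + 2) → ℝ) a) := by
    intro a b
    have h := key (coordFun a b)
    rw [coordFun_wedge, coordFun_wedge, coordFun_wedge] at h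
    simpa using h
  have h12 := hcoord 0 1
  have h34 := hcoord 2 3
  have h13 := hcoord 0 2
  have h14 := hcoord 0 3
  have h23 := hcoord 1 2
  have h24 := hcoord 1 3
  simp [Pi.single_apply] at h12 h34 h13 h14 h23 h24
  have : (0 : ℝ) = 1 := by
    linear_combination (A 2 * B 3 - A 3 * B 2) * h12 + h34 -
      (A 1 * B 3 - A 3 * B 1) * h13 + (A 1 * B 2 - A 2 * B 1) * h14
  norm_num at this
end
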